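/- arXiv:1803.08210 — 7 statements merged into one kernel-verified Lean document; each statement's English description precedes it below -/
import Mathlib

section
/- For all integers a, c with a ≥ 0, we have ∑_{ℓ=0}^{a} (-1)^ℓ·C(a,ℓ)·C(2ℓ,c) = (-1)^a·C(a,c-a)·2^{2a-c}, where in the case c > 2a both sides are zero (interpreting 2^{2a-c} times the vanishing binomial coefficient as zero). -/
/-- Generalized binomial coefficient `C(z,n)` for integer `z`:
`z(z-1)⋯(z-n+1)/n!` for `n ≥ 0` and `0` for `n < 0`. -/
noncomputable def gbinom (z n : ℤ) : ℚ :=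
  if 0 ≤ n then (∏ i ∈ Finset.range n.toNat, ((z : ℚ) - (i : ℚ))) / (Nat.factorial n.toNat : ℚ)
  else 0

/-! The substitution `Y = (X + 1)²` turns the sum into the coefficient of `X ^ c` in
`(1 - (X + 1)²) ^ a = (-1) ^ a * (X + 2) ^ a * X ^ a`, which is read off from the binomial
theorem for `(X + 2) ^ a`. -/

open Finset Polynomial

lemma gbinom_of_neg (z : ℤ) {n : ℤ} (hn : n < 0) : gbinom z n = 0 :=
  if_neg (not_le.2 hn)

lemma gbinom_natCast (n k : ℕ) : gbinom n k = n.choose k := by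
  simp [gbinom, Nat.cast_choose_eq_descPochhammer_div, descPochhammer_eval_eq_prod_range]

lemma sum_Icc_zero_natCast {M : Type*} [AddCommMonoid M] (f : ℤ → M) (n : ℕ) :
    ∑ i ∈ Icc (0 : ℤ) n, f i = ∑ i ∈ range (n + 1), f i := by
  rw [Int.Icc_eq_finset_map, sum_map]
  simp

section CommRing

variable {R : Type*} [CommRing R]

lemma alternating_sum_choose_mul_X_add_one_pow_two_mul (a : ℕ) :
    ∑ ℓ ∈ range (a + 1), C ((-1 : R) ^ ℓ * a.choose ℓ) * (X + 1) ^ (2 * ℓ)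
      = C ((-1 : R) ^ a) * ((X + C 2) ^ a * X ^ a) := by
  have hfactor : (-(X + 1) ^ 2 + 1 : R[X]) ^ a = C ((-1 : R) ^ a) * ((X + C 2) ^ a * X ^ a) := by
    rw [map_pow, ← mul_pow, ← mul_pow, map_neg, map_one, map_ofNat]
    ring
  rw [← hfactor, add_pow]
  refine sum_congr rfl fun ℓ _ => ?_
  rw [neg_pow ((X + 1) ^ 2 : R[X]), one_pow, mul_one, pow_mul, map_mul, map_pow, map_neg, map_one,
    map_natCast]
  ring

lemma alternating_sum_choose_mul_choose_two_mul_eq_coeff (a c : ℕ) :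
    ∑ ℓ ∈ range (a + 1), (-1 : R) ^ ℓ * a.choose ℓ * (2 * ℓ).choose c
      = (-1 : R) ^ a * ((X + C 2) ^ a * X ^ a : R[X]).coeff c := by
  have h := congrArg (coeff · c) (alternating_sum_choose_mul_X_add_one_pow_two_mul (R := R) a)
  simpa only [finsetSum_coeff, coeff_C_mul, coeff_X_add_one_pow] using h

lemma alternating_sum_choose_mul_choose_two_mul_of_lt {a c : ℕ} (h : c < a) :
    ∑ ℓ ∈ range (a + 1), (-1 : R) ^ ℓ * a.choose ℓ * (2 * ℓ).choose c = 0 := by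
  simp [alternating_sum_choose_mul_choose_two_mul_eq_coeff, coeff_mul_X_pow', h.not_ge]

lemma alternating_sum_choose_mul_choose_two_mul_add (a k : ℕ) :
    ∑ ℓ ∈ range (a + 1), (-1 : R) ^ ℓ * a.choose ℓ * (2 * ℓ).choose (k + a)
      = (-1 : R) ^ a * a.choose k * 2 ^ (a - k) := by
  rw [alternating_sum_choose_mul_choose_two_mul_eq_coeff, coeff_mul_X_pow, coeff_X_add_C_pow]
  ring

end CommRing

theorem alternating_sum_gbinom_double (a c : ℤ) (ha : 0 ≤ a) :
    ∑ ℓ ∈ Finset.Icc (0 : ℤ) a, (-1 : ℚ) ^ ℓ * gbinom a ℓ * gbinom (2 * ℓ) c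
      = (-1 : ℚ) ^ a * gbinom a (c - a) * (2 : ℚ) ^ (2 * a - c) := by
  lift a to ℕ using ha
  rcases lt_or_ge c 0 with hc | hc
  · simp [gbinom_of_neg _ hc, gbinom_of_neg _ (show c - a < 0 by omega)]
  lift c to ℕ using hc
  have hsum : ∑ ℓ ∈ Icc (0 : ℤ) a, (-1 : ℚ) ^ ℓ * gbinom a ℓ * gbinom (2 * ℓ) c
      = ∑ ℓ ∈ range (a + 1), (-1 : ℚ) ^ ℓ * a.choose ℓ * (2 * ℓ).choose c := by
    rw [sum_Icc_zero_natCast]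
    refine sum_congr rfl fun ℓ _ => ?_
    rw [zpow_natCast, gbinom_natCast, show 2 * (ℓ : ℤ) = (2 * ℓ : ℕ) by push_cast; rfl,
      gbinom_natCast]
  rw [hsum, zpow_natCast]
  rcases lt_or_ge c a with hca | hac
  · rw [alternating_sum_choose_mul_choose_two_mul_of_lt hca, gbinom_of_neg _ (by omega),
      mul_zero, zero_mul]
  obtain ⟨k, rfl⟩ := Nat.exists_eq_add_of_le' hac
  rw [alternating_sum_choose_mul_choose_two_mul_add, Nat.cast_add, add_sub_cancel_right,
    gbinom_natCast]
  rcases le_or_gt k a with hka | hak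
  · rw [show 2 * (a : ℤ) - (k + a) = ((a - k : ℕ) : ℤ) by omega, zpow_natCast]
  · simp [Nat.choose_eq_zero_of_lt hak]
end

section
/- For every nonzero real r and every y > 0, the modified Bessel function satisfies K_r(y) < 4^{|r|}·(1 + 1/y + Γ(|r|)/y^{|r|})·e^{-y}. -/
open MeasureTheory Set

/-- The modified Bessel function `K_w(y) = (1/2)∫_0^∞ e^{-y(t+1/t)/2} t^{w-1} dt`. -/
noncomputable def besselK (w y : ℝ) : ℝ :=
  (1 / 2) * ∫ t in Set.Ioi (0 : ℝ), Real.exp (-(y * (t + 1 / t) / 2)) * t ^ (w - 1)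

namespace BesselKAux

theorem transl (f : ℝ → ℝ) : ∫ t in Ioi (2:ℝ), f (t - 2) = ∫ s in Ioi (0:ℝ), f s := by
  have h := (measurePreserving_add_right (volume : Measure ℝ) 2).setIntegral_preimage_emb
    (MeasurableEquiv.addRight (2:ℝ)).measurableEmbedding (fun t => f (t - 2)) (Ioi 2)
  simp only [preimage_add_const_Ioi] at h
  norm_num at h
  exact h.symm

theorem inv1 (f : ℝ → ℝ) : ∫ x in Ioi (0:ℝ), (x ^ (-2:ℝ)) • f x⁻¹ = ∫ y in Ioi (0:ℝ), f y := by
  have h := integral_comp_rpow_Ioi f (p := (-1:ℝ)) (by norm_num)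
  rw [← h]
  refine setIntegral_congr_fun measurableSet_Ioi fun x hx => ?_
  rw [Real.rpow_neg_one]
  norm_num

theorem gammaInt {a c : ℝ} (ha : 0 < a) (hc : 0 < c) :
    ∫ t in Ioi (0:ℝ), t ^ (a-1) * Real.exp (-(c * t)) = c⁻¹ ^ a * Real.Gamma a := by
  rw [Real.integral_rpow_mul_exp_neg_mul_Ioi ha hc, one_div]

theorem expInt {c : ℝ} (hc : 0 < c) :
    ∫ t in Ioi (0:ℝ), Real.exp (-(c * t)) = c⁻¹ := by
  have h := Real.integral_rpow_mul_exp_neg_mul_Ioi one_pos hc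
  simp only [sub_self, Real.rpow_zero, one_mul, Real.Gamma_one, mul_one, Real.rpow_one,
    one_div] at h
  exact h

theorem intOn {a c : ℝ} (ha : 0 < a) (hc : 0 < c) :
    IntegrableOn (fun t => t ^ (a-1) * Real.exp (-(c * t))) (Ioi (0:ℝ)) := by
  have h := integrableOn_rpow_mul_exp_neg_mul_rpow (p := 1) (s := a - 1) (b := c)
    (by linarith) one_pos hc
  refine h.congr_fun (fun x hx => ?_) measurableSet_Ioi
  beta_reduce
  rw [Real.rpow_one]
  ring_nf

theorem intOnExp {c : ℝ} (hc : 0 < c) :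
    IntegrableOn (fun t => Real.exp (-(c * t))) (Ioi (0:ℝ)) :=
  (exp_neg_integrableOn_Ioi 0 hc).congr_fun (fun x _ => by simp only [neg_mul]) measurableSet_Ioi

theorem invInt (f : ℝ → ℝ) (h : IntegrableOn f (Ioi (0:ℝ))) :
    IntegrableOn (fun x => (x ^ (-2:ℝ)) • f x⁻¹) (Ioi (0:ℝ)) := by
  have h2 := (integrableOn_Ioi_comp_rpow_iff f (p := (-1:ℝ)) (by norm_num)).mpr h
  refine h2.congr_fun (fun x hx => ?_) measurableSet_Ioi
  beta_reduce
  rw [Real.rpow_neg_one]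
  norm_num

/-- Integrability of the tail profile. -/
theorem tailIntegrable {a y : ℝ} (ha : 0 < a) (hy : 0 < y) :
    IntegrableOn (fun t => Real.exp (-(y*(t-2)/2)) * t ^ (a-1)) (Ioi (2:ℝ)) := by
  have h := ((intOn ha (half_pos hy)).mono_set (Ioi_subset_Ioi (by norm_num : (0:ℝ) ≤ 2)))
  have h2 : IntegrableOn (fun t => Real.exp y * (t ^ (a-1) * Real.exp (-(y/2 * t))))
      (Ioi (2:ℝ)) := h.const_mul (Real.exp y)
  refine h2.congr_fun (fun t ht => ?_) measurableSet_Ioi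
  rw [show -(y*(t-2)/2) = y + -(y/2*t) by ring, Real.exp_add]
  ring

/-- The key tail bound. -/
theorem tail_le {a y : ℝ} (ha : 0 < a) (hy : 0 < y) :
    ∫ t in Ioi (2:ℝ), Real.exp (-(y*(t-2)/2)) * t ^ (a-1)
      ≤ 4 ^ a * (1/y + Real.Gamma a / y ^ a) := by
  have hc : 0 < y/2 := half_pos hy
  have key : (∫ t in Ioi (2:ℝ), Real.exp (-(y*(t-2)/2)) * t ^ (a-1))
      = ∫ s in Ioi (0:ℝ), Real.exp (-(y/2*s)) * (s+2) ^ (a-1) := by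
    rw [← transl (fun s => Real.exp (-(y/2*s)) * (s+2) ^ (a-1))]
    refine setIntegral_congr_fun measurableSet_Ioi fun t ht => ?_
    rw [sub_add_cancel]
    congr 2
    ring
  rw [key]
  have hGam : 0 < Real.Gamma a := Real.Gamma_pos_of_pos ha
  have hya : 0 < y ^ a := Real.rpow_pos_of_pos hy a
  have h2a : (0:ℝ) < 2 ^ a := Real.rpow_pos_of_pos two_pos a
  have h4a : (0:ℝ) < 4 ^ a := Real.rpow_pos_of_pos (by norm_num) a
  have h24 : (2:ℝ) ^ a ≤ 4 ^ a := Real.rpow_le_rpow (by norm_num) (by norm_num) ha.le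
  have hval : ∫ t in Ioi (0:ℝ), t ^ (a-1) * Real.exp (-(y/2 * t))
      = 2 ^ a / y ^ a * Real.Gamma a := by
    rw [gammaInt ha hc]
    congr 1
    rw [show (y/2)⁻¹ = 2/y by rw [inv_div], Real.div_rpow (by norm_num) hy.le]
  have hmemae : ∀ᵐ s ∂(volume.restrict (Ioi (0:ℝ))), s ∈ Ioi (0:ℝ) :=
    ae_restrict_mem measurableSet_Ioi
  rcases le_total a 1 with hA | hA
  · -- a ≤ 1 : (s+2)^(a-1) ≤ s^(a-1)
    have mono : (∫ s in Ioi (0:ℝ), Real.exp (-(y/2*s)) * (s+2) ^ (a-1))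
        ≤ ∫ s in Ioi (0:ℝ), s ^ (a-1) * Real.exp (-(y/2*s)) := by
      refine integral_mono_of_nonneg (hmemae.mono fun s hs =>
          mul_nonneg (Real.exp_pos _).le
            (Real.rpow_nonneg (by have := mem_Ioi.mp hs; linarith) _))
        (intOn ha hc) (hmemae.mono fun s hs => ?_)
      have hs0 : (0:ℝ) < s := hs
      have hb : (s+2) ^ (a-1) ≤ s ^ (a-1) :=
        Real.rpow_le_rpow_of_nonpos hs0 (by linarith) (by linarith)
      calc Real.exp (-(y/2*s)) * (s+2) ^ (a-1)
          ≤ Real.exp (-(y/2*s)) * s ^ (a-1) := by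
            exact mul_le_mul_of_nonneg_left hb (Real.exp_pos _).le
        _ = s ^ (a-1) * Real.exp (-(y/2*s)) := mul_comm _ _
    calc (∫ s in Ioi (0:ℝ), Real.exp (-(y/2*s)) * (s+2) ^ (a-1))
        ≤ 2 ^ a / y ^ a * Real.Gamma a := by rw [← hval]; exact mono
      _ ≤ 4 ^ a * (1/y + Real.Gamma a / y ^ a) := by
          rw [div_mul_eq_mul_div, mul_add]
          have h1 : 2 ^ a * Real.Gamma a / y ^ a ≤ 4 ^ a * (Real.Gamma a / y ^ a) := by
            rw [mul_div_assoc]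
            exact mul_le_mul_of_nonneg_right h24 (by positivity)
          have h2 : (0:ℝ) ≤ 4 ^ a * (1/y) := by positivity
          linarith
  · -- 1 ≤ a : (s+2)^(a-1) ≤ 2^(a-1) s^(a-1) + 4^(a-1)
    have mono : (∫ s in Ioi (0:ℝ), Real.exp (-(y/2*s)) * (s+2) ^ (a-1))
        ≤ ∫ s in Ioi (0:ℝ),
            (2 ^ (a-1) * (s ^ (a-1) * Real.exp (-(y/2*s))) + 4 ^ (a-1) * Real.exp (-(y/2*s))) := by
      refine integral_mono_of_nonneg (hmemae.mono fun s hs =>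
          mul_nonneg (Real.exp_pos _).le
            (Real.rpow_nonneg (by have := mem_Ioi.mp hs; linarith) _))
        (((intOn ha hc).const_mul _).add ((intOnExp hc).const_mul _))
        (hmemae.mono fun s hs => ?_)
      have hs0 : (0:ℝ) < s := hs
      rcases le_total s 2 with hs2 | hs2
      · have hb : (s+2) ^ (a-1) ≤ 4 ^ (a-1) :=
          Real.rpow_le_rpow (by positivity) (by linarith) (by linarith)
        have : Real.exp (-(y/2*s)) * (s+2) ^ (a-1) ≤ 4 ^ (a-1) * Real.exp (-(y/2*s)) := by
          rw [mul_comm]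
          exact mul_le_mul_of_nonneg_right hb (Real.exp_pos _).le
        have hnn : (0:ℝ) ≤ 2 ^ (a-1) * (s ^ (a-1) * Real.exp (-(y/2*s))) := by positivity
        linarith
      · have hb : (s+2) ^ (a-1) ≤ 2 ^ (a-1) * s ^ (a-1) := by
          rw [← Real.mul_rpow (by norm_num) hs0.le]
          exact Real.rpow_le_rpow (by positivity) (by linarith) (by linarith)
        have : Real.exp (-(y/2*s)) * (s+2) ^ (a-1)
            ≤ 2 ^ (a-1) * (s ^ (a-1) * Real.exp (-(y/2*s))) := by
          calc Real.exp (-(y/2*s)) * (s+2) ^ (a-1)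
              ≤ Real.exp (-(y/2*s)) * (2 ^ (a-1) * s ^ (a-1)) :=
                mul_le_mul_of_nonneg_left hb (Real.exp_pos _).le
            _ = 2 ^ (a-1) * (s ^ (a-1) * Real.exp (-(y/2*s))) := by ring
        have hnn : (0:ℝ) ≤ 4 ^ (a-1) * Real.exp (-(y/2*s)) := by positivity
        linarith
    have hsum : (∫ s in Ioi (0:ℝ),
        (2 ^ (a-1) * (s ^ (a-1) * Real.exp (-(y/2*s))) + 4 ^ (a-1) * Real.exp (-(y/2*s))))
        = 2 ^ (a-1) * (2 ^ a / y ^ a * Real.Gamma a) + 4 ^ (a-1) * (2/y) := by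
      rw [integral_add (((intOn ha hc).const_mul _)) ((intOnExp hc).const_mul _),
        integral_const_mul, integral_const_mul, hval, expInt hc]
      congr 2
      rw [show (y/2)⁻¹ = 2/y by rw [inv_div]]
    have h2am : (2:ℝ) ^ (a-1) = 2 ^ a / 2 := by
      rw [Real.rpow_sub two_pos, Real.rpow_one]
    have h4am : (4:ℝ) ^ (a-1) = 4 ^ a / 4 := by
      rw [Real.rpow_sub (by norm_num), Real.rpow_one]
    have h4eq : (4:ℝ) ^ a = 2 ^ a * 2 ^ a := by
      rw [show (4:ℝ) = 2 * 2 by norm_num, Real.mul_rpow (by norm_num) (by norm_num)]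
    calc (∫ s in Ioi (0:ℝ), Real.exp (-(y/2*s)) * (s+2) ^ (a-1))
        ≤ 2 ^ (a-1) * (2 ^ a / y ^ a * Real.Gamma a) + 4 ^ (a-1) * (2/y) := by
          rw [← hsum]; exact mono
      _ ≤ 4 ^ a * (1/y + Real.Gamma a / y ^ a) := by
          rw [h2am, h4am, h4eq]
          have hpos1 : (0:ℝ) < (2 ^ a * 2 ^ a) * (Real.Gamma a / y ^ a) := by positivity
          have hpos2 : (0:ℝ) < (2 ^ a * 2 ^ a) * (1 / y) := by positivity
          have hkey : 2 ^ a * 2 ^ a * (1 / y + Real.Gamma a / y ^ a)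
              - (2 ^ a / 2 * (2 ^ a / y ^ a * Real.Gamma a) + 2 ^ a * 2 ^ a / 4 * (2 / y))
              = 2 ^ a * 2 ^ a * (Real.Gamma a / y ^ a) / 2 + 2 ^ a * 2 ^ a * (1 / y) / 2 := by
            ring
          linarith [hpos1, hpos2, hkey]

end BesselKAux

open BesselKAux in
theorem besselK_bound' (r y : ℝ) (hr : r ≠ 0) (hy : 0 < y) :
    besselK r y <
      (4 : ℝ) ^ |r| * (1 + 1 / y + Real.Gamma |r| / y ^ |r|) * Real.exp (-y) := by
  have ha : 0 < |r| := abs_pos.mpr hr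
  set a := |r| with hadef
  have har1 : r ≤ a := le_abs_self r
  have har2 : -a ≤ r := neg_abs_le r
  have hGam : 0 < Real.Gamma a := Real.Gamma_pos_of_pos ha
  have hya : 0 < y ^ a := Real.rpow_pos_of_pos hy a
  -- tail profile and its indicator
  set g0 : ℝ → ℝ := fun t => Real.exp (-(y*(t-2)/2)) * t ^ (a-1) with hg0
  set gI : ℝ → ℝ := (Ioi (2:ℝ)).indicator g0 with hgI
  have hg0int : IntegrableOn g0 (Ioi (2:ℝ)) := tailIntegrable ha hy
  have hgIint : Integrable gI := by
    rw [hgI, integrable_indicator_iff measurableSet_Ioi]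
    exact hg0int
  -- left piece
  set ell : ℝ → ℝ := fun t => Real.exp (-(y*(1/t-2)/2)) * t ^ (-a-1) with hell
  -- pointwise identity : x^(-2) • gI x⁻¹ = indicator (Ioo 0 (1/2)) ell x  for x > 0
  have hptid : ∀ x ∈ Ioi (0:ℝ), (x ^ (-2:ℝ)) • gI x⁻¹ = (Ioo (0:ℝ) (1/2)).indicator ell x := by
    intro x hx
    have hx0 : (0:ℝ) < x := hx
    rcases lt_or_ge x (1/2) with hxh | hxh
    · have hmem : x ∈ Ioo (0:ℝ) (1/2) := ⟨hx0, hxh⟩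
      have hinv : (2:ℝ) < x⁻¹ := by
        rw [← one_div, lt_div_iff₀ hx0]; linarith
      rw [indicator_of_mem hmem, hgI, indicator_of_mem (mem_Ioi.mpr hinv), hg0, hell, smul_eq_mul]
      have hrw : (x⁻¹) ^ (a-1) = x ^ (-(a-1)) := by
        rw [Real.inv_rpow hx0.le, ← Real.rpow_neg hx0.le]
      show x ^ (-2:ℝ) * (Real.exp (-(y * (x⁻¹ - 2) / 2)) * x⁻¹ ^ (a - 1))
          = Real.exp (-(y * (1 / x - 2) / 2)) * x ^ (-a - 1)
      rw [hrw, inv_eq_one_div x]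
      rw [show (-a-1 : ℝ) = -2 + -(a-1) by ring, Real.rpow_add hx0]
      ring
    · have hnm : x ∉ Ioo (0:ℝ) (1/2) := fun h => absurd h.2 (not_lt.mpr hxh)
      have hinv : x⁻¹ ∉ Ioi (2:ℝ) := by
        simp only [mem_Ioi, not_lt]
        rw [← one_div, div_le_iff₀ hx0]; linarith
      rw [indicator_of_notMem hnm, hgI, indicator_of_notMem hinv, smul_eq_mul, mul_zero]
  -- the four majorant pieces
  set i1 : ℝ → ℝ := (Ioo (0:ℝ) (1/2)).indicator ell with hi1
  set i2 : ℝ → ℝ := (Icc (1/2:ℝ) 1).indicator (fun _ => (2:ℝ) ^ (a+1)) with hi2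
  set i3 : ℝ → ℝ := (Ioc (1:ℝ) 2).indicator (fun _ => (2:ℝ) ^ a) with hi3
  -- integral identities
  have hIooT : ∫ x in Ioi (0:ℝ), i1 x = ∫ t in Ioi (2:ℝ), g0 t := by
    rw [hi1, ← setIntegral_congr_fun measurableSet_Ioi hptid, inv1 gI, hgI,
      setIntegral_indicator measurableSet_Ioi]
    congr 1
    rw [Ioi_inter_Ioi]
    norm_num
  have hi4T : ∫ x in Ioi (0:ℝ), gI x = ∫ t in Ioi (2:ℝ), g0 t := by
    rw [hgI, setIntegral_indicator measurableSet_Ioi]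
    congr 1
    rw [Ioi_inter_Ioi]
    norm_num
  have hi2val : ∫ x in Ioi (0:ℝ), i2 x = 2 ^ a := by
    rw [hi2, setIntegral_indicator measurableSet_Icc,
      show Ioi (0:ℝ) ∩ Icc (1/2) 1 = Icc (1/2) 1 by
        rw [inter_eq_right]; intro x hx; have := hx.1; simp only [mem_Ioi]; linarith,
      setIntegral_const, measureReal_def, Real.volume_Icc]
    rw [Real.rpow_add two_pos, Real.rpow_one]
    rw [show ((1:ℝ) - 1/2) = 1/2 by norm_num, ENNReal.toReal_ofReal (by norm_num)]
    simp [smul_eq_mul]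
    ring
  have hi3val : ∫ x in Ioi (0:ℝ), i3 x = 2 ^ a := by
    rw [hi3, setIntegral_indicator measurableSet_Ioc,
      show Ioi (0:ℝ) ∩ Ioc 1 2 = Ioc 1 2 by
        rw [inter_eq_right]; intro x hx; have := hx.1; simp only [mem_Ioi]; linarith,
      setIntegral_const, measureReal_def, Real.volume_Ioc]
    rw [show ((2:ℝ) - 1) = 1 by norm_num, ENNReal.toReal_ofReal (by norm_num)]
    simp [smul_eq_mul]
  -- integrability
  have hl_int : IntegrableOn i1 (Ioi (0:ℝ)) :=
    (invInt gI hgIint.integrableOn).congr_fun hptid measurableSet_Ioi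
  have hi2int : Integrable i2 := by
    rw [hi2, integrable_indicator_iff measurableSet_Icc]
    refine (integrableOn_const_iff (C := (2:ℝ) ^ (a+1))).mpr (Or.inr ?_)
    rw [Real.volume_Icc]; exact ENNReal.ofReal_lt_top
  have hi3int : Integrable i3 := by
    rw [hi3, integrable_indicator_iff measurableSet_Ioc]
    refine (integrableOn_const_iff (C := (2:ℝ) ^ a)).mpr (Or.inr ?_)
    rw [Real.volume_Ioc]; exact ENNReal.ofReal_lt_top
  have hSumInt : IntegrableOn (fun t => i1 t + i2 t + i3 t + gI t) (Ioi (0:ℝ)) :=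
    ((hl_int.add hi2int.integrableOn).add hi3int.integrableOn).add hgIint.integrableOn
  -- nonnegativity of pieces
  have hi1nn : ∀ t, 0 ≤ i1 t := fun t =>
    indicator_nonneg (fun s hs => mul_nonneg (Real.exp_pos _).le (Real.rpow_nonneg hs.1.le _)) t
  have hi2nn : ∀ t, 0 ≤ i2 t := fun t =>
    indicator_nonneg (fun s _ => (Real.rpow_pos_of_pos two_pos _).le) t
  have hi3nn : ∀ t, 0 ≤ i3 t := fun t =>
    indicator_nonneg (fun s _ => (Real.rpow_pos_of_pos two_pos _).le) t
  have hi4nn : ∀ t, 0 ≤ gI t := fun t => by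
    rw [hgI]
    refine indicator_nonneg (fun s hs => ?_) t
    exact mul_nonneg (Real.exp_pos _).le (Real.rpow_nonneg (by linarith [mem_Ioi.mp hs]) _)
  have hmemae : ∀ᵐ t ∂(volume.restrict (Ioi (0:ℝ))), t ∈ Ioi (0:ℝ) :=
    ae_restrict_mem measurableSet_Ioi
  -- the pointwise bound
  have hptle : ∀ t ∈ Ioi (0:ℝ), Real.exp (-(y * (t + 1 / t) / 2)) * t ^ (r - 1)
      ≤ Real.exp (-y) * (i1 t + i2 t + i3 t + gI t) := by
    intro t ht
    have ht0 : (0:ℝ) < t := ht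
    have key : ∀ k, (k = i1 t ∨ k = i2 t ∨ k = i3 t ∨ k = gI t) →
        Real.exp (-(y * (t + 1 / t) / 2)) * t ^ (r - 1) ≤ Real.exp (-y) * k →
        Real.exp (-(y * (t + 1 / t) / 2)) * t ^ (r - 1)
          ≤ Real.exp (-y) * (i1 t + i2 t + i3 t + gI t) := by
      intro k hk hle
      refine hle.trans (mul_le_mul_of_nonneg_left ?_ (Real.exp_pos _).le)
      have h1 := hi1nn t; have h2 := hi2nn t; have h3 := hi3nn t; have h4 := hi4nn t
      rcases hk with rfl | rfl | rfl | rfl <;> linarith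
    rcases lt_or_ge t (1/2) with htc | htc
    · -- left region
      refine key (i1 t) (Or.inl rfl) ?_
      rw [hi1, indicator_of_mem (show t ∈ Ioo (0:ℝ) (1/2) from ⟨ht0, htc⟩), hell,
        ← mul_assoc, ← Real.exp_add]
      have hexp : Real.exp (-(y * (t + 1 / t) / 2)) ≤ Real.exp (-y + -(y*(1/t-2)/2)) := by
        rw [Real.exp_le_exp]
        have h0 : 0 ≤ y * t := mul_nonneg hy.le ht0.le
        nlinarith
      have hrp : t ^ (r-1) ≤ t ^ (-a-1) :=
        Real.rpow_le_rpow_of_exponent_ge ht0 (by linarith) (by linarith)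
      exact mul_le_mul hexp hrp (Real.rpow_nonneg ht0.le _) (Real.exp_pos _).le
    rcases le_or_gt t 1 with htc2 | htc2
    · -- middle-left region
      refine key (i2 t) (Or.inr (Or.inl rfl)) ?_
      rw [hi2, indicator_of_mem (show t ∈ Icc (1/2:ℝ) 1 from ⟨htc, htc2⟩)]
      have h2le : 2 ≤ t + 1/t := by
        rw [← sub_nonneg, show t + 1/t - 2 = (t-1)^2 / t by field_simp; ring]
        positivity
      have hexp : Real.exp (-(y * (t + 1 / t) / 2)) ≤ Real.exp (-y) := by
        rw [Real.exp_le_exp]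
        nlinarith [mul_nonneg hy.le (by linarith : (0:ℝ) ≤ t + 1/t - 2)]
      have hrp : t ^ (r-1) ≤ 2 ^ (a+1) := by
        rw [Real.rpow_def_of_pos ht0, Real.rpow_def_of_pos two_pos, Real.exp_le_exp]
        have hlog1 : Real.log t ≤ 0 := Real.log_nonpos ht0.le htc2
        have hlog2 : -Real.log 2 ≤ Real.log t := by
          rw [← Real.log_inv]
          exact Real.log_le_log (by norm_num) (by rw [inv_eq_one_div]; linarith)
        have habs : |r - 1| ≤ a + 1 := by
          have h := abs_add_le r (-1)
          rw [abs_neg, abs_one] at h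
          calc |r - 1| = |r + (-1)| := by ring_nf
            _ ≤ |r| + 1 := h
            _ = a + 1 := by rw [hadef]
        calc Real.log t * (r-1) = (r-1) * Real.log t := mul_comm _ _
          _ ≤ |(r-1) * Real.log t| := le_abs_self _
          _ = |r-1| * |Real.log t| := abs_mul _ _
          _ ≤ (a+1) * Real.log 2 := by
              refine mul_le_mul habs ?_ (abs_nonneg _) (by linarith)
              rw [abs_of_nonpos hlog1]
              linarith
          _ = Real.log 2 * (a+1) := mul_comm _ _
      exact mul_le_mul hexp hrp (Real.rpow_nonneg ht0.le _) (Real.exp_pos _).le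
    rcases le_or_gt t 2 with htc3 | htc3
    · -- middle-right region
      refine key (i3 t) (Or.inr (Or.inr (Or.inl rfl))) ?_
      rw [hi3, indicator_of_mem (show t ∈ Ioc (1:ℝ) 2 from ⟨htc2, htc3⟩)]
      have h2le : 2 ≤ t + 1/t := by
        rw [← sub_nonneg, show t + 1/t - 2 = (t-1)^2 / t by field_simp; ring]
        positivity
      have hexp : Real.exp (-(y * (t + 1 / t) / 2)) ≤ Real.exp (-y) := by
        rw [Real.exp_le_exp]
        nlinarith [mul_nonneg hy.le (by linarith : (0:ℝ) ≤ t + 1/t - 2)]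
      have hrp : t ^ (r-1) ≤ 2 ^ a := by
        rw [Real.rpow_def_of_pos ht0, Real.rpow_def_of_pos two_pos, Real.exp_le_exp]
        have hlog1 : 0 ≤ Real.log t := Real.log_nonneg htc2.le
        have hlog2 : Real.log t ≤ Real.log 2 := Real.log_le_log ht0 htc3
        calc Real.log t * (r-1) = (r-1) * Real.log t := mul_comm _ _
          _ ≤ a * Real.log t := mul_le_mul_of_nonneg_right (by linarith) hlog1
          _ ≤ a * Real.log 2 := mul_le_mul_of_nonneg_left hlog2 ha.le
          _ = Real.log 2 * a := mul_comm _ _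
      exact mul_le_mul hexp hrp (Real.rpow_nonneg ht0.le _) (Real.exp_pos _).le
    · -- right region
      refine key (gI t) (Or.inr (Or.inr (Or.inr rfl))) ?_
      rw [hgI, indicator_of_mem (mem_Ioi.mpr htc3), hg0, ← mul_assoc, ← Real.exp_add]
      have hexp : Real.exp (-(y * (t + 1 / t) / 2)) ≤ Real.exp (-y + -(y*(t-2)/2)) := by
        rw [Real.exp_le_exp]
        have h0 : 0 ≤ y * (1/t) := mul_nonneg hy.le (by positivity)
        nlinarith
      have hrp : t ^ (r-1) ≤ t ^ (a-1) :=
        Real.rpow_le_rpow_of_exponent_le (by linarith) (by linarith)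
      exact mul_le_mul hexp hrp (Real.rpow_nonneg ht0.le _) (Real.exp_pos _).le
  -- assemble
  set T : ℝ := (∫ t in Ioi (2:ℝ), g0 t) with hT
  have hTB : T ≤ 4 ^ a * (1/y + Real.Gamma a / y ^ a) := tail_le ha hy
  have hmain : (∫ t in Ioi (0:ℝ), Real.exp (-(y * (t + 1 / t) / 2)) * t ^ (r - 1))
      ≤ Real.exp (-y) * (2 * T + 2 ^ a + 2 ^ a) := by
    have hle : (∫ t in Ioi (0:ℝ), Real.exp (-(y * (t + 1 / t) / 2)) * t ^ (r - 1))
        ≤ ∫ t in Ioi (0:ℝ), Real.exp (-y) * (i1 t + i2 t + i3 t + gI t) := by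
      refine integral_mono_of_nonneg (hmemae.mono fun t ht => ?_)
        (hSumInt.const_mul _) (hmemae.mono fun t ht => hptle t ht)
      exact mul_nonneg (Real.exp_pos _).le (Real.rpow_nonneg (le_of_lt ht) _)
    refine hle.trans (le_of_eq ?_)
    rw [integral_const_mul]
    congr 1
    have hI12 : IntegrableOn (fun t => i1 t + i2 t) (Ioi (0:ℝ)) :=
      hl_int.add hi2int.integrableOn
    have hI123 : IntegrableOn (fun t => i1 t + i2 t + i3 t) (Ioi (0:ℝ)) :=
      hI12.add hi3int.integrableOn
    rw [integral_add hI123 hgIint.integrableOn, integral_add hI12 hi3int.integrableOn,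
      integral_add hl_int hi2int.integrableOn, hIooT, hi2val, hi3val, hi4T]
    ring
  have hfin : besselK r y ≤ Real.exp (-y) * (T + 2 ^ a) := by
    rw [besselK]
    calc (1/2) * ∫ t in Set.Ioi (0:ℝ), Real.exp (-(y * (t + 1 / t) / 2)) * t ^ (r - 1)
        ≤ (1/2) * (Real.exp (-y) * (2 * T + 2 ^ a + 2 ^ a)) := by
          refine mul_le_mul_of_nonneg_left hmain (by norm_num)
      _ = Real.exp (-y) * (T + 2 ^ a) := by ring
  have h24 : (2:ℝ) ^ a < 4 ^ a := Real.rpow_lt_rpow (by norm_num) (by norm_num) ha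
  calc besselK r y ≤ Real.exp (-y) * (T + 2 ^ a) := hfin
    _ ≤ Real.exp (-y) * (4 ^ a * (1/y + Real.Gamma a / y ^ a) + 2 ^ a) := by
        refine mul_le_mul_of_nonneg_left (by linarith) (Real.exp_pos _).le
    _ < Real.exp (-y) * (4 ^ a * (1/y + Real.Gamma a / y ^ a) + 4 ^ a) := by
        refine mul_lt_mul_of_pos_left (by linarith) (Real.exp_pos _)
    _ = (4 : ℝ) ^ a * (1 + 1 / y + Real.Gamma a / y ^ a) * Real.exp (-y) := by ring
end

section
/- For all real y > 0 and r ∈ ℝ, setting r' = max(0,r), one has ∑_{m=1}^∞ m^r e^{-my} ≤ e^{-y}·(1 + 2^{r'} e^{-y} + 3^{r'} Γ(r'+1)/y^{r'+1}). -/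
open Real MeasureTheory Set Finset

theorem sum_pow_mul_exp_le (y r : ℝ) (hy : 0 < y) :
    ∑' m : ℕ, ((m : ℝ) + 1) ^ r * Real.exp (-(((m : ℝ) + 1) * y)) ≤
      Real.exp (-y) * (1 + 2 ^ max 0 r * Real.exp (-y) +
        3 ^ max 0 r * Real.Gamma (max 0 r + 1) / y ^ (max 0 r + 1)) := by
  set s := max 0 r with hs_def
  have hs : 0 ≤ s := le_max_left 0 r
  set F : ℝ → ℝ := fun t => t ^ s * Real.exp (-(y * t)) with hF
  -- integrability of F on (0, ∞)
  have hFint : IntegrableOn F (Ioi 0) := by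
    have := integrableOn_rpow_mul_exp_neg_mul_rpow (s := s) (p := 1) (b := y)
      (by linarith) zero_lt_one hy
    simpa [hF, Real.rpow_one] using this
  -- value of the full integral
  have hA : ∫ t in Ioi 0, F t = Real.Gamma (s + 1) / y ^ (s + 1) := by
    have h := Real.integral_rpow_mul_exp_neg_mul_Ioi (a := s + 1) (r := y)
      (by linarith) hy
    simp only [add_sub_cancel_right] at h
    rw [hF]
    rw [h, one_div, Real.inv_rpow hy.le, inv_mul_eq_div]
  -- continuity of F on positive intervals
  have hFcont : ∀ a b : ℝ, 0 < a → ContinuousOn F (Icc a b) := by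
    intro a b ha
    intro t ht
    have ht0 : t ≠ 0 := by have := ht.1; intro h; rw [h] at this; linarith
    exact (((Real.continuousAt_rpow_const t s (Or.inl ht0)).mul
      ((Real.continuous_exp.comp (continuous_const.mul continuous_id).neg).continuousAt))).continuousWithinAt
  set f : ℕ → ℝ := fun m => ((m : ℝ) + 1) ^ s * Real.exp (-(((m : ℝ) + 1) * y)) with hf
  have hfnonneg : ∀ m : ℕ, 0 ≤ f m := by
    intro m
    have : (0:ℝ) < (m:ℝ) + 1 := by positivity
    positivity
  -- pointwise bound r → s
  have hrs : ∀ m : ℕ, ((m : ℝ) + 1) ^ r * Real.exp (-(((m : ℝ) + 1) * y)) ≤ f m := by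
    intro m
    apply mul_le_mul_of_nonneg_right _ (Real.exp_nonneg _)
    have hm : (0:ℝ) ≤ (m:ℝ) := Nat.cast_nonneg m
    exact Real.rpow_le_rpow_of_exponent_le (by linarith) (le_max_right 0 r)
  -- per-term integral bound for the tail
  have hterm : ∀ i : ℕ, f (i + 2) ≤
      Real.exp (-y) * (3 ^ s * ∫ t in ((i:ℝ)+1)..((i:ℝ)+2), F t) := by
    intro i
    have hle : ((i:ℝ)+1) ≤ ((i:ℝ)+2) := by linarith
    have hint : IntervalIntegrable F volume ((i:ℝ)+1) ((i:ℝ)+2) :=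
      (hFcont _ _ (by positivity)).intervalIntegrable_of_Icc hle
    have hconst : IntervalIntegrable (fun _ : ℝ => ((i:ℝ)+1) ^ s * Real.exp (-(y*((i:ℝ)+2))))
        volume ((i:ℝ)+1) ((i:ℝ)+2) := intervalIntegrable_const
    have h1 : ((i:ℝ)+1) ^ s * Real.exp (-(y*((i:ℝ)+2))) ≤ ∫ t in ((i:ℝ)+1)..((i:ℝ)+2), F t := by
      have := intervalIntegral.integral_mono_on hle hconst hint (fun t ht => by
        have ht1 : ((i:ℝ)+1) ≤ t := ht.1
        have ht2 : t ≤ (i:ℝ)+2 := ht.2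
        have hb : ((i:ℝ)+1) ^ s ≤ t ^ s :=
          Real.rpow_le_rpow (by positivity) ht1 hs
        have he : Real.exp (-(y*((i:ℝ)+2))) ≤ Real.exp (-(y*t)) := by
          apply Real.exp_le_exp.mpr; nlinarith
        exact mul_le_mul hb he (Real.exp_nonneg _)
          (Real.rpow_nonneg (le_trans (by positivity) ht1) s))
      have h4 : (((i:ℝ)+2) - ((i:ℝ)+1)) • (((i:ℝ)+1) ^ s * Real.exp (-(y*((i:ℝ)+2))))
          = ((i:ℝ)+1) ^ s * Real.exp (-(y*((i:ℝ)+2))) := by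
        rw [smul_eq_mul]; ring
      rwa [intervalIntegral.integral_const, h4] at this
    have h2 : ((i:ℝ)+3) ^ s ≤ 3 ^ s * ((i:ℝ)+1) ^ s := by
      rw [← Real.mul_rpow (by norm_num) (by positivity)]
      have hi : (0:ℝ) ≤ (i:ℝ) := Nat.cast_nonneg i
      exact Real.rpow_le_rpow (by positivity) (by linarith) hs
    have h3 : Real.exp (-(((i:ℝ)+3)*y)) = Real.exp (-y) * Real.exp (-(y*((i:ℝ)+2))) := by
      rw [← Real.exp_add]; ring_nf
    have : f (i + 2) = ((i:ℝ)+3) ^ s * Real.exp (-(((i:ℝ)+3)*y)) := by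
      simp only [hf]; push_cast; ring_nf
    rw [this, h3]
    calc ((i:ℝ)+3) ^ s * (Real.exp (-y) * Real.exp (-(y*((i:ℝ)+2))))
        ≤ 3 ^ s * ((i:ℝ)+1) ^ s * (Real.exp (-y) * Real.exp (-(y*((i:ℝ)+2)))) := by
          apply mul_le_mul_of_nonneg_right h2 (by positivity)
      _ = Real.exp (-y) * (3 ^ s * (((i:ℝ)+1) ^ s * Real.exp (-(y*((i:ℝ)+2))))) := by ring
      _ ≤ Real.exp (-y) * (3 ^ s * ∫ t in ((i:ℝ)+1)..((i:ℝ)+2), F t) := by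
          apply mul_le_mul_of_nonneg_left _ (Real.exp_nonneg _)
          exact mul_le_mul_of_nonneg_left h1 (by positivity)
  -- sum of adjacent integrals, and bound by the full integral
  have hsumint : ∀ n : ℕ, ∑ i ∈ Finset.range n, ∫ t in ((i:ℝ)+1)..((i:ℝ)+2), F t ≤
      Real.Gamma (s + 1) / y ^ (s + 1) := by
    intro n
    have htel : ∑ i ∈ Finset.range n, ∫ t in ((i:ℝ)+1)..((i:ℝ)+2), F t
        = ∫ t in (1:ℝ)..((n:ℝ)+1), F t := by
      have := intervalIntegral.sum_integral_adjacent_intervals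
        (a := fun k : ℕ => (k:ℝ)+1) (n := n) (f := F) (μ := volume) (fun k _ => by
          have hk : ((fun k : ℕ => (k:ℝ)+1) k) ≤ ((fun k : ℕ => (k:ℝ)+1) (k+1)) := by
            simp only; push_cast; linarith
          exact (hFcont _ _ (by positivity)).intervalIntegrable_of_Icc hk)
      simp only [Nat.cast_zero, zero_add] at this
      rw [← this]
      refine Finset.sum_congr rfl fun i _ => ?_
      congr 1
      push_cast; ring
    rw [htel, ← hA]
    have hn : (0:ℝ) ≤ (n:ℝ) := Nat.cast_nonneg n
    rw [intervalIntegral.integral_of_le (by linarith : (1:ℝ) ≤ (n:ℝ)+1)]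
    apply setIntegral_mono_set hFint
    · filter_upwards [ae_restrict_mem measurableSet_Ioi] with t ht
      exact le_of_lt (by have : (0:ℝ) < t := ht; positivity)
    · refine HasSubset.Subset.eventuallyLE ?_
      intro t ht
      exact lt_of_lt_of_le one_pos ht.1.le
  -- partial sum bound
  apply Real.tsum_le_of_sum_range_le
    (fun m => by
      have : (0:ℝ) < (m:ℝ) + 1 := by positivity
      positivity)
  intro n
  have step1 : ∑ m ∈ Finset.range n, ((m : ℝ) + 1) ^ r * Real.exp (-(((m : ℝ) + 1) * y))
      ≤ ∑ m ∈ Finset.range n, f m := Finset.sum_le_sum (fun m _ => hrs m)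
  have step2 : ∑ m ∈ Finset.range n, f m ≤ ∑ m ∈ Finset.range (n+2), f m :=
    Finset.sum_le_sum_of_subset_of_nonneg
      (Finset.range_subset_range.mpr (by omega)) (fun m _ _ => hfnonneg m)
  have step3 : ∑ m ∈ Finset.range (n+2), f m
      = f 0 + f 1 + ∑ i ∈ Finset.range n, f (i+2) := by
    rw [Finset.sum_range_succ' _ (n+1), Finset.sum_range_succ' _ n]
    ring
  have step4 : ∑ i ∈ Finset.range n, f (i+2) ≤
      Real.exp (-y) * (3 ^ s * (Real.Gamma (s + 1) / y ^ (s + 1))) := by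
    calc ∑ i ∈ Finset.range n, f (i+2)
        ≤ ∑ i ∈ Finset.range n, Real.exp (-y) * (3 ^ s * ∫ t in ((i:ℝ)+1)..((i:ℝ)+2), F t) :=
          Finset.sum_le_sum (fun i _ => hterm i)
      _ = Real.exp (-y) * (3 ^ s * ∑ i ∈ Finset.range n, ∫ t in ((i:ℝ)+1)..((i:ℝ)+2), F t) := by
          rw [← Finset.mul_sum, ← Finset.mul_sum]
      _ ≤ Real.exp (-y) * (3 ^ s * (Real.Gamma (s + 1) / y ^ (s + 1))) := by
          apply mul_le_mul_of_nonneg_left _ (Real.exp_nonneg _)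
          exact mul_le_mul_of_nonneg_left (hsumint n) (by positivity)
  have hf0 : f 0 = Real.exp (-y) := by simp [hf]
  have hf1 : f 1 = 2 ^ s * Real.exp (-(2*y)) := by norm_num [hf]
  have hexp2 : Real.exp (-(2*y)) = Real.exp (-y) * Real.exp (-y) := by
    rw [← Real.exp_add]; ring_nf
  calc ∑ m ∈ Finset.range n, ((m : ℝ) + 1) ^ r * Real.exp (-(((m : ℝ) + 1) * y))
      ≤ f 0 + f 1 + ∑ i ∈ Finset.range n, f (i+2) := by
        rw [← step3]; exact le_trans step1 step2
    _ ≤ Real.exp (-y) + 2 ^ s * Real.exp (-(2*y)) +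
          Real.exp (-y) * (3 ^ s * (Real.Gamma (s + 1) / y ^ (s + 1))) := by
        rw [hf0, hf1]; linarith [step4]
    _ = Real.exp (-y) * (1 + 2 ^ s * Real.exp (-y) +
          3 ^ s * Real.Gamma (s + 1) / y ^ (s + 1)) := by
        rw [hexp2]; ring
end

section
/- For even nonnegative integers k and k₂ with k₂ ≤ k, and all complex u (avoiding poles of the Gamma functions): ∑_{ℓ=0}^{k₂/2} (-1)^ℓ·Γ(k-1+2u+2ℓ)/(Γ(k/2+u+ℓ)·(k₂/2-ℓ)!·(2ℓ)!) = ((2i)^{k₂}/k₂!)·Γ(k-1+2u)/Γ(k/2-k₂/2+u). -/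
open Complex Finset

lemma gamma_shift (z : ℂ) (hz : 0 < z.re) (n : ℕ) :
    Complex.Gamma (z + n) = Complex.Gamma z * ∏ j ∈ Finset.range n, (z + j) := by
  induction n with
  | zero => simp
  | succ n ih =>
    have hne : z + n ≠ 0 := by
      intro h
      have h2 := congrArg Complex.re h
      simp only [Complex.add_re, Complex.natCast_re, Complex.zero_re] at h2
      have h3 : (0:ℝ) ≤ n := Nat.cast_nonneg n
      linarith
    rw [show ((n+1 : ℕ) : ℂ) = (n : ℂ) + 1 by push_cast; ring, show z + ((n:ℂ)+1) = (z + n) + 1 by ring,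
      Complex.Gamma_add_one _ hne, ih, Finset.prod_range_succ]
    ring

lemma prod_double (s : ℂ) (ℓ : ℕ) :
    ∏ j ∈ Finset.range (2*ℓ), (2*s - 1 + j) =
      4^ℓ * ∏ j ∈ Finset.range ℓ, ((s - 1/2 + j) * (s + j)) := by
  induction ℓ with
  | zero => simp
  | succ n ih =>
    rw [show 2*(n+1) = (2*n)+1+1 by ring, Finset.prod_range_succ, Finset.prod_range_succ, ih,
      Finset.prod_range_succ]
    push_cast
    ring

noncomputable def cc (m ℓ : ℕ) : ℂ :=
  (-4)^ℓ / ((Nat.factorial (m-ℓ)) * (Nat.factorial (2*ℓ)))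

noncomputable def pp (x : ℂ) (ℓ : ℕ) : ℂ := ∏ j ∈ Finset.range ℓ, (x + j)

lemma fact_ne (n : ℕ) : ((Nat.factorial n : ℂ)) ≠ 0 :=
  Nat.cast_ne_zero.mpr (Nat.factorial_ne_zero n)

lemma key (m ℓ : ℕ) (h : ℓ < m) :
    ((2*m+2)*(2*m+1) : ℂ) * cc (m+1) (ℓ+1)
      = -4 * cc m ℓ + (4*(ℓ+1)+4*m+2) * cc m (ℓ+1) := by
  obtain ⟨j, rfl⟩ : ∃ j, m = ℓ + 1 + j := ⟨m - (ℓ+1), by omega⟩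
  have e1 : ((Nat.factorial (2*(ℓ+1)) : ℂ)) = (2*ℓ+2)*((2*ℓ+1)*((Nat.factorial (2*ℓ) : ℂ))) := by
    rw [show 2*(ℓ+1) = (2*ℓ+1)+1 by ring, Nat.factorial_succ, Nat.factorial_succ]
    push_cast; ring
  have e2 : ((Nat.factorial (j+1) : ℂ)) = ((j:ℂ)+1)*((Nat.factorial j : ℂ)) := by
    rw [Nat.factorial_succ]; push_cast; ring
  have hD1 : ((Nat.factorial (j+1) : ℂ)) * (Nat.factorial (2*(ℓ+1)) : ℂ) ≠ 0 :=
    mul_ne_zero (fact_ne _) (fact_ne _)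
  have hD2 : ((Nat.factorial (j+1) : ℂ)) * (Nat.factorial (2*ℓ) : ℂ) ≠ 0 :=
    mul_ne_zero (fact_ne _) (fact_ne _)
  have hD3 : ((Nat.factorial j : ℂ)) * (Nat.factorial (2*(ℓ+1)) : ℂ) ≠ 0 :=
    mul_ne_zero (fact_ne _) (fact_ne _)
  simp only [cc, show ℓ+1+j+1-(ℓ+1) = j+1 by omega, show ℓ+1+j-ℓ = j+1 by omega,
    show ℓ+1+j-(ℓ+1) = j by omega]
  rw [← mul_div_assoc, ← mul_div_assoc, ← mul_div_assoc, div_add_div _ _ hD2 hD3,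
    div_eq_div_iff hD1 (mul_ne_zero hD2 hD3), e1, e2]
  push_cast
  ring

lemma key0 (m : ℕ) : ((2*m+2)*(2*m+1) : ℂ) * cc (m+1) 0 = (4*(0:ℕ)+4*(m:ℂ)+2) * cc m 0 := by
  simp only [cc, pow_zero, Nat.sub_zero, mul_zero, Nat.factorial_zero, Nat.factorial_succ]
  have h1 := fact_ne m
  have h2 : ((m:ℂ)+1) ≠ 0 := Nat.cast_add_one_ne_zero m
  push_cast
  field_simp
  ring

lemma keytop (m : ℕ) : ((2*m+2)*(2*m+1) : ℂ) * cc (m+1) (m+1) = -4 * cc m m := by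
  simp only [cc, Nat.sub_self, Nat.factorial_zero, one_mul]
  have e1 : ((Nat.factorial (2*(m+1)) : ℂ)) = (2*m+2)*((2*m+1)*((Nat.factorial (2*m) : ℂ))) := by
    rw [show 2*(m+1) = (2*m+1)+1 by ring, Nat.factorial_succ, Nat.factorial_succ]
    push_cast; ring
  have h1 := fact_ne (2*m)
  have h2 : (2*(m:ℂ)+2) ≠ 0 := by
    have : ((2*m+2 : ℕ) : ℂ) ≠ 0 := Nat.cast_ne_zero.mpr (by omega)
    push_cast at this; convert this using 1
  have h3 : (2*(m:ℂ)+1) ≠ 0 := by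
    have : ((2*m+1 : ℕ) : ℂ) ≠ 0 := Nat.cast_ne_zero.mpr (by omega)
    push_cast at this; convert this using 1
  rw [e1]
  field_simp
  ring

lemma poly_step (m : ℕ) (x : ℂ) :
    ((2*m+2)*(2*m+1) : ℂ) * ∑ ℓ ∈ Finset.range (m+2), cc (m+1) ℓ * pp x ℓ
      = (-4*x + 4*m + 2) * ∑ ℓ ∈ Finset.range (m+1), cc m ℓ * pp x ℓ := by
  have hpp : ∀ ℓ : ℕ, pp x (ℓ+1) = pp x ℓ * (x + ℓ) := fun ℓ => Finset.prod_range_succ _ _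
  have L : ((2*m+2)*(2*m+1) : ℂ) * ∑ ℓ ∈ Finset.range (m+2), cc (m+1) ℓ * pp x ℓ
      = ((∑ ℓ ∈ Finset.range m, ((2*m+2)*(2*m+1) : ℂ) * (cc (m+1) (ℓ+1) * pp x (ℓ+1)))
        + ((2*m+2)*(2*m+1) : ℂ) * (cc (m+1) 0 * pp x 0))
        + ((2*m+2)*(2*m+1) : ℂ) * (cc (m+1) (m+1) * pp x (m+1)) := by
    rw [Finset.mul_sum, Finset.sum_range_succ, Finset.sum_range_succ']
  have R : (-4*x + 4*(m:ℂ) + 2) * ∑ ℓ ∈ Finset.range (m+1), cc m ℓ * pp x ℓ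
      = ((∑ ℓ ∈ Finset.range m,
            (-4 * (cc m ℓ * pp x (ℓ+1)) + (4*((ℓ+1 : ℕ):ℂ)+4*m+2) * (cc m (ℓ+1) * pp x (ℓ+1))))
        + (4*((0:ℕ):ℂ)+4*m+2) * (cc m 0 * pp x 0))
        + -4 * (cc m m * pp x (m+1)) := by
    rw [Finset.mul_sum]
    calc ∑ ℓ ∈ Finset.range (m+1), (-4*x + 4*(m:ℂ) + 2) * (cc m ℓ * pp x ℓ)
        = ∑ ℓ ∈ Finset.range (m+1),
            (-4 * (cc m ℓ * pp x (ℓ+1)) + (4*(ℓ:ℂ)+4*m+2) * (cc m ℓ * pp x ℓ)) :=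
          Finset.sum_congr rfl (fun ℓ _ => by rw [hpp]; ring)
      _ = (∑ ℓ ∈ Finset.range (m+1), -4 * (cc m ℓ * pp x (ℓ+1)))
          + ∑ ℓ ∈ Finset.range (m+1), (4*(ℓ:ℂ)+4*m+2) * (cc m ℓ * pp x ℓ) :=
          Finset.sum_add_distrib
      _ = ((∑ ℓ ∈ Finset.range m, -4 * (cc m ℓ * pp x (ℓ+1)))
            + -4 * (cc m m * pp x (m+1)))
          + ((∑ ℓ ∈ Finset.range m, (4*((ℓ+1 : ℕ):ℂ)+4*m+2) * (cc m (ℓ+1) * pp x (ℓ+1)))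
            + (4*((0:ℕ):ℂ)+4*m+2) * (cc m 0 * pp x 0)) := by
          rw [Finset.sum_range_succ, Finset.sum_range_succ']
      _ = _ := by rw [Finset.sum_add_distrib]; ring
  rw [L, R]
  congr 1
  congr 1
  · refine Finset.sum_congr rfl fun ℓ hℓ => ?_
    have hk := key m ℓ (Finset.mem_range.mp hℓ)
    push_cast at hk ⊢
    linear_combination pp x (ℓ+1) * hk
  · have h0 := key0 m
    push_cast at h0 ⊢
    linear_combination pp x 0 * h0
  · have ht := keytop m
    linear_combination pp x (m+1) * ht

lemma poly_id (m : ℕ) (x : ℂ) :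
    ∑ ℓ ∈ Finset.range (m+1), cc m ℓ * pp x ℓ
      = (-4:ℂ)^m / (Nat.factorial (2*m)) * ∏ j ∈ Finset.range m, (x - 1/2 - j) := by
  induction m with
  | zero => simp [cc, pp]
  | succ n ih =>
    have h2 : (2*(n:ℂ)+2) ≠ 0 := by
      have : ((2*n+2 : ℕ) : ℂ) ≠ 0 := Nat.cast_ne_zero.mpr (by omega)
      push_cast at this; convert this using 1
    have h3 : (2*(n:ℂ)+1) ≠ 0 := by
      have : ((2*n+1 : ℕ) : ℂ) ≠ 0 := Nat.cast_ne_zero.mpr (by omega)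
      push_cast at this; convert this using 1
    have hC : ((2*n+2)*(2*n+1) : ℂ) ≠ 0 := mul_ne_zero h2 h3
    have e1 : ((Nat.factorial (2*(n+1)) : ℂ)) = (2*n+2)*((2*n+1)*((Nat.factorial (2*n) : ℂ))) := by
      rw [show 2*(n+1) = (2*n+1)+1 by ring, Nat.factorial_succ, Nat.factorial_succ]
      push_cast; ring
    have hstep := poly_step n x
    rw [ih] at hstep
    apply mul_left_cancel₀ hC
    rw [show n+1+1 = n+2 from rfl, hstep, Finset.prod_range_succ, e1]
    have h1 := fact_ne (2*n)
    push_cast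
    field_simp
    field_simp
    ring

lemma final_alg (a b q c g : ℂ) (hb : b ≠ 0) (hq : q ≠ 0) (hg : g ≠ 0) :
    a / (b * q) * (c / g * q) = c / g * (a / b) := by
  field_simp

theorem gamma_alternating_sum (k k₂ : ℕ) (hk : Even k) (hk₂ : Even k₂) (hle : k₂ ≤ k)
    (u : ℂ) (hu : (1 : ℝ) / 2 < u.re) :
    ∑ ℓ ∈ Finset.range (k₂ / 2 + 1),
        (-1 : ℂ) ^ ℓ * Complex.Gamma ((k : ℂ) - 1 + 2 * u + 2 * ℓ) /
          (Complex.Gamma ((k : ℂ) / 2 + u + ℓ) *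
            (Nat.factorial (k₂ / 2 - ℓ)) * (Nat.factorial (2 * ℓ)))
      = (2 * Complex.I) ^ k₂ / (Nat.factorial k₂) *
          (Complex.Gamma ((k : ℂ) - 1 + 2 * u) /
            Complex.Gamma ((k : ℂ) / 2 - (k₂ : ℂ) / 2 + u)) := by
  obtain ⟨N, rfl⟩ := hk
  obtain ⟨M, rfl⟩ := hk₂
  have hMN : M ≤ N := by omega
  set s : ℂ := (N : ℂ) + u with hs_def
  have hs : 0 < s.re := by
    simp only [hs_def, Complex.add_re, Complex.natCast_re]
    have : (0:ℝ) ≤ N := Nat.cast_nonneg N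
    linarith
  have hsM : 0 < (s - M).re := by
    simp only [hs_def, Complex.sub_re, Complex.add_re, Complex.natCast_re]
    have : (M:ℝ) ≤ N := Nat.cast_le.mpr hMN
    linarith
  have h2s : 0 < (2*s - 1).re := by
    have he : (2*s - 1) = (((2*N - 1 : ℝ)) : ℂ) + 2*u := by
      simp only [hs_def]; push_cast; ring
    rw [he]
    simp only [Complex.add_re, Complex.ofReal_re, Complex.mul_re, Complex.re_ofNat,
      Complex.im_ofNat]
    have : (0:ℝ) ≤ N := Nat.cast_nonneg N
    nlinarith
  have hΓs : Complex.Gamma s ≠ 0 := Complex.Gamma_ne_zero_of_re_pos hs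
  have hΓsM : Complex.Gamma (s - M) ≠ 0 := Complex.Gamma_ne_zero_of_re_pos hsM
  simp only [show (M+M)/2 = M by omega]
  have hterm : ∀ ℓ ∈ Finset.range (M+1),
      (-1 : ℂ) ^ ℓ * Complex.Gamma ((↑(N+N) : ℂ) - 1 + 2 * u + 2 * ℓ) /
          (Complex.Gamma ((↑(N+N) : ℂ) / 2 + u + ℓ) *
            (Nat.factorial (M - ℓ)) * (Nat.factorial (2 * ℓ)))
        = Complex.Gamma (2*s-1) / Complex.Gamma s * (cc M ℓ * pp (s - 1/2) ℓ) := by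
    intro ℓ _
    have hA : ((↑(N+N) : ℂ) - 1 + 2 * u + 2 * ℓ) = (2*s - 1) + ((2*ℓ : ℕ) : ℂ) := by
      simp only [hs_def]; push_cast; ring
    have hB : ((↑(N+N) : ℂ) / 2 + u + ℓ) = s + ((ℓ : ℕ) : ℂ) := by
      simp only [hs_def]; push_cast; ring
    rw [hA, hB, gamma_shift _ h2s, gamma_shift _ hs, prod_double s ℓ,
      Finset.prod_mul_distrib]
    have hprod : (∏ j ∈ Finset.range ℓ, (s + (j:ℂ))) ≠ 0 := by
      refine Finset.prod_ne_zero_iff.mpr fun j _ => ?_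
      intro h
      have h2 := congrArg Complex.re h
      simp only [Complex.add_re, Complex.natCast_re, Complex.zero_re] at h2
      have h3 : (0:ℝ) ≤ j := Nat.cast_nonneg j
      linarith
    have hm4 : ((-4:ℂ))^ℓ = (-1)^ℓ * 4^ℓ := by
      rw [← neg_one_mul, mul_pow]
    simp only [cc, pp, hm4]
    have h1 := fact_ne (M - ℓ)
    have h2 := fact_ne (2*ℓ)
    have hD : (Complex.Gamma s * ∏ j ∈ Finset.range ℓ, (s + (j:ℂ)))
        * ((Nat.factorial (M-ℓ) : ℂ)) * ((Nat.factorial (2*ℓ) : ℂ)) ≠ 0 :=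
      mul_ne_zero (mul_ne_zero (mul_ne_zero hΓs hprod) h1) h2
    rw [div_eq_iff hD]
    field_simp
  rw [Finset.sum_congr rfl hterm, ← Finset.mul_sum, poly_id M (s - 1/2)]
  have hC : ((↑(N+N) : ℂ)) / 2 - (↑(M+M) : ℂ) / 2 + u = s - M := by
    simp only [hs_def]; push_cast; ring
  have hD : ((↑(N+N) : ℂ)) - 1 + 2*u = 2*s - 1 := by
    simp only [hs_def]; push_cast; ring
  have hI : (2 * Complex.I) ^ (M+M) = (-4:ℂ)^M := by
    rw [show M+M = 2*M by ring, pow_mul]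
    norm_num [mul_pow, Complex.I_sq]
  rw [hC, hD, hI, show M+M = 2*M by ring]
  have hGs : Complex.Gamma s = Complex.Gamma (s - M) * ∏ j ∈ Finset.range M, ((s - M) + j) := by
    have h := gamma_shift (s - M) hsM M
    rwa [show s - (M:ℂ) + (M:ℂ) = s by ring] at h
  have hPP : (∏ j ∈ Finset.range M, ((s - M) + (j:ℂ)))
      = ∏ j ∈ Finset.range M, (s - 1/2 - 1/2 - (j:ℂ)) := by
    rw [← Finset.prod_range_reflect (fun j => s - 1/2 - 1/2 - (j:ℂ)) M]
    refine Finset.prod_congr rfl fun j hj => ?_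
    have hj' := Finset.mem_range.mp hj
    have hc : ((M - 1 - j : ℕ) : ℂ) = (M:ℂ) - 1 - (j:ℂ) := by
      rw [show M - 1 - j = M - (1 + j) by omega]
      push_cast [Nat.cast_sub (by omega : 1 + j ≤ M)]
      ring
    rw [hc]
    ring
  have hQ : (∏ j ∈ Finset.range M, (s - 1/2 - 1/2 - (j:ℂ))) ≠ 0 := by
    rw [← hPP]
    refine Finset.prod_ne_zero_iff.mpr fun j _ => ?_
    intro h
    have h2 := congrArg Complex.re h
    simp only [Complex.add_re, Complex.sub_re, Complex.natCast_re, Complex.zero_re] at h2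
    have h3 : (0:ℝ) ≤ j := Nat.cast_nonneg j
    have h4 : 0 < s.re - M := by
      simpa [Complex.sub_re, Complex.natCast_re] using hsM
    linarith
  rw [hGs, hPP]
  exact final_alg _ _ _ _ _ hΓsM hQ (fact_ne (2*M))
end

section
/- With A^k_h(u) as defined for even integer k, integer h, nonnegative integer u, one has the product representation A^k_h(u) = ((-1)^{k/2}/u!)·∏_{ℓ=k/2+1-u}^{max(0,k/2)} [(h-1/2)² - (ℓ-1/2)²], where an empty product equals 1. -/
/-- The coefficient `𝒜^k_h(u)` from the Fourier expansion of `E^*_k(z,h)`. -/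
noncomputable def Acoef (k h : ℤ) (u : ℕ) : ℚ :=
  if 0 ≤ k then
    (-1 : ℚ) ^ ((u : ℤ) + k / 2) * (Nat.factorial u : ℚ) *
      gbinom (k / 2 + h - 1) u * gbinom (k / 2 - h) u
  else
    (-1 : ℚ) ^ (u : ℤ) * ((Nat.factorial ((u : ℤ) - k / 2).toNat : ℚ)) ^ 2 /
      (Nat.factorial u : ℚ) * gbinom (h - 1) ((u : ℤ) - k / 2) * gbinom (-h) ((u : ℤ) - k / 2)

/-!
Since `(h - 1/2)² - (ℓ - 1/2)² = -(ℓ + h - 1)(ℓ - h)`, the product over the `n` consecutive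
integers `ℓ = a, a - 1, …, a + 1 - n` is `(-1)ⁿ` times the two falling factorials
`(a + h - 1)ₙ (a - h)ₙ = (n!)² C(a + h - 1, n) C(a - h, n)`. For `k ≥ 0` take `a = k/2` and
`n = u`; for `k < 0` take `a = 0` and `n = u - k/2`.
-/

open Finset Nat

lemma gbinom_natCast_s11 (z : ℤ) (n : ℕ) :
    gbinom z n = (∏ i ∈ range n, ((z : ℚ) - i)) / n ! := by
  simp [gbinom]

lemma prod_Icc_eq_prod_range_sub {M : Type*} [CommMonoid M] (a : ℤ) (n : ℕ) (f : ℤ → M) :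
    ∏ ℓ ∈ Icc (a + 1 - n) a, f ℓ = ∏ i ∈ range n, f (a - i) := by
  symm
  refine prod_nbij' (fun i ↦ a - i) (fun ℓ ↦ (a - ℓ).toNat) ?_ ?_ ?_ ?_ (fun _ _ ↦ rfl) <;>
    intro x hx <;> simp only [mem_range, mem_Icc] at hx ⊢ <;> omega

lemma prod_Icc_half_sq_sub_half_sq (a h : ℤ) (n : ℕ) :
    ∏ ℓ ∈ Icc (a + 1 - n) a, (((h : ℚ) - 1 / 2) ^ 2 - ((ℓ : ℚ) - 1 / 2) ^ 2) =
      (-1) ^ n * (n ! : ℚ) ^ 2 * gbinom (a + h - 1) n * gbinom (a - h) n := by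
  have factor (i : ℕ) : ((h : ℚ) - 1 / 2) ^ 2 - (((a - i : ℤ) : ℚ) - 1 / 2) ^ 2 =
      -1 * ((((a + h - 1 : ℤ) : ℚ) - i) * (((a - h : ℤ) : ℚ) - i)) := by
    push_cast; ring
  have hn : (n ! : ℚ) ≠ 0 := by positivity
  rw [prod_Icc_eq_prod_range_sub, gbinom_natCast_s11, gbinom_natCast_s11]
  simp only [factor, prod_mul_distrib, prod_const, card_range]
  field_simp

theorem Acoef_prod_rep_general (k h : ℤ) (u : ℕ) :
    Acoef k h u = (-1 : ℚ) ^ (k / 2) / (Nat.factorial u : ℚ) *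
      ∏ ℓ ∈ Finset.Icc (k / 2 + 1 - u) (max 0 (k / 2)),
        (((h : ℚ) - 1 / 2) ^ 2 - ((ℓ : ℚ) - 1 / 2) ^ 2) := by
  have hu : (u ! : ℚ) ≠ 0 := by positivity
  rw [Acoef]
  split_ifs with hk
  · rw [max_eq_right (by omega), prod_Icc_half_sq_sub_half_sq,
      zpow_add₀ (by norm_num), zpow_natCast]
    field_simp
  · obtain ⟨v, hv⟩ : ∃ v : ℕ, (u : ℤ) - k / 2 = v := ⟨_, (Int.toNat_of_nonneg (by omega)).symm⟩
    have hsign : (-1 : ℚ) ^ (u : ℤ) = (-1) ^ (k / 2) * (-1) ^ v := by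
      rw [← zpow_natCast, ← zpow_add₀ (by norm_num)]
      congr 1
      omega
    rw [max_eq_left (by omega), hv, Int.toNat_natCast, show k / 2 + 1 - u = 0 + 1 - v by omega,
      prod_Icc_half_sq_sub_half_sq, hsign]
    simp only [zero_add, zero_sub]
    field_simp

theorem Acoef_prod_rep (k h : ℤ) (u : ℕ) (hk : 2 ∣ k) :
    Acoef k h u = (-1 : ℚ) ^ (k / 2) / (Nat.factorial u : ℚ) *
      ∏ ℓ ∈ Finset.Icc (k / 2 + 1 - u) (max 0 (k / 2)),
        (((h : ℚ) - 1 / 2) ^ 2 - ((ℓ : ℚ) - 1 / 2) ^ 2) :=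
  Acoef_prod_rep_general k h u
end

section
/- Let k be even, h an integer, u a nonnegative integer, and set h* = h-1 if h ≥ 1, h* = -h if h ≤ 0. If h* < k/2 then A^k_h(u) ≠ 0 if and only if 0 ≤ u ≤ k/2 - 1 - h*; if h* ≥ k/2 then A^k_h(u) ≠ 0 if and only if 0 ≤ u ≤ k/2 + h*. -/
/-!
Up to a nonzero factor (a sign and factorials), `𝒜^k_h(u)` is `C(k/2+h-1, u) · C(k/2-h, u)` for
`k ≥ 0` and `C(h-1, u-k/2) · C(-h, u-k/2)` for `k < 0`. A binomial coefficient `C(z, n)` with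
`n ≥ 0` vanishes exactly when `0 ≤ z < n`, since its numerator is the falling factorial
`z (z-1) ⋯ (z-n+1)`. Splitting on the sign of `h`, one of the two upper entries is `k/2 - 1 - h*`
and the other `k/2 + h*` (resp. `-1 - h*` and `h*` for `k < 0`), and the two nonvanishing
conditions combine into the stated bound on `u`.
-/

lemma prod_range_intCast_sub_eq_zero_iff {K : Type*} [Field K] [CharZero K] (z : ℤ) (n : ℕ) :
    ∏ i ∈ Finset.range n, ((z : K) - (i : K)) = 0 ↔ 0 ≤ z ∧ z < n := by
  simp only [Finset.prod_eq_zero_iff, Finset.mem_range, sub_eq_zero]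
  constructor
  · rintro ⟨i, hi, hzi⟩
    have : z = i := by exact_mod_cast hzi
    omega
  · rintro ⟨hz, hzn⟩
    exact ⟨z.toNat, by omega, by exact_mod_cast (Int.toNat_of_nonneg hz).symm⟩

lemma gbinom_ne_zero_iff (z : ℤ) {n : ℤ} (hn : 0 ≤ n) :
    gbinom z n ≠ 0 ↔ z < 0 ∨ n ≤ z := by
  have hfac : (n.toNat.factorial : ℚ) ≠ 0 := Nat.cast_ne_zero.2 n.toNat.factorial_ne_zero
  rw [gbinom, if_pos hn, div_ne_zero_iff, ne_eq, prod_range_intCast_sub_eq_zero_iff]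
  simp only [hfac, ne_eq, not_false_eq_true, and_true]
  omega

lemma Acoef_ne_zero_iff_of_nonneg {k : ℤ} (hk : 0 ≤ k) (h : ℤ) (u : ℕ) :
    Acoef k h u ≠ 0 ↔ gbinom (k / 2 + h - 1) u ≠ 0 ∧ gbinom (k / 2 - h) u ≠ 0 := by
  have hsign : (-1 : ℚ) ^ ((u : ℤ) + k / 2) ≠ 0 := zpow_ne_zero _ (by norm_num)
  have hfac : (u.factorial : ℚ) ≠ 0 := Nat.cast_ne_zero.2 u.factorial_ne_zero
  simp only [Acoef, if_pos hk, ne_eq, mul_eq_zero, hsign, hfac, false_or, not_or]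

lemma Acoef_ne_zero_iff_of_neg {k : ℤ} (hk : k < 0) (h : ℤ) (u : ℕ) :
    Acoef k h u ≠ 0 ↔
      gbinom (h - 1) ((u : ℤ) - k / 2) ≠ 0 ∧ gbinom (-h) ((u : ℤ) - k / 2) ≠ 0 := by
  have hsign : (-1 : ℚ) ^ (u : ℤ) ≠ 0 := zpow_ne_zero _ (by norm_num)
  have hfac : (u.factorial : ℚ) ≠ 0 := Nat.cast_ne_zero.2 u.factorial_ne_zero
  have hfac' : (((u : ℤ) - k / 2).toNat.factorial : ℚ) ≠ 0 :=
    Nat.cast_ne_zero.2 (Nat.factorial_ne_zero _)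
  simp only [Acoef, if_neg hk.not_ge, ne_eq, mul_eq_zero, div_eq_zero_iff, pow_eq_zero_iff,
    hsign, hfac, hfac', two_ne_zero, false_or, or_false, not_or, not_false_eq_true]

theorem Acoef_ne_zero_iff_general (k h : ℤ) (u : ℕ) :
    ((if 1 ≤ h then h - 1 else -h) < k / 2 →
      (Acoef k h u ≠ 0 ↔ (u : ℤ) ≤ k / 2 - 1 - (if 1 ≤ h then h - 1 else -h))) ∧
    (k / 2 ≤ (if 1 ≤ h then h - 1 else -h) →
      (Acoef k h u ≠ 0 ↔ (u : ℤ) ≤ k / 2 + (if 1 ≤ h then h - 1 else -h))) := by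
  rcases le_or_gt 0 k with hk | hk
  · rw [Acoef_ne_zero_iff_of_nonneg hk, gbinom_ne_zero_iff _ u.cast_nonneg,
      gbinom_ne_zero_iff _ u.cast_nonneg]
    split_ifs <;> omega
  · have hu : 0 ≤ (u : ℤ) - k / 2 := by omega
    rw [Acoef_ne_zero_iff_of_neg hk, gbinom_ne_zero_iff _ hu, gbinom_ne_zero_iff _ hu]
    split_ifs <;> omega

theorem Acoef_ne_zero_iff (k h : ℤ) (u : ℕ) (hk : 2 ∣ k) :
    ((if 1 ≤ h then h - 1 else -h) < k / 2 →
      (Acoef k h u ≠ 0 ↔ (u : ℤ) ≤ k / 2 - 1 - (if 1 ≤ h then h - 1 else -h))) ∧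
    (k / 2 ≤ (if 1 ≤ h then h - 1 else -h) →
      (Acoef k h u ≠ 0 ↔ (u : ℤ) ≤ k / 2 + (if 1 ≤ h then h - 1 else -h))) :=
  Acoef_ne_zero_iff_general k h u
end

section
/- For every integer r, every nonnegative integer n with |r| ≤ n, and real variable x, the polynomial P^n_r(x) = ∑_{ℓ=|r|}^{n} (2n)!/((n-ℓ)!(ℓ+r)!(ℓ-r)!)·(-x)^ℓ satisfies the derivative recurrence 4·(d/dx)P^n_r(x) = (1/x)·P^{n+1}_r(x) + (2 - (4n+2)/x)·P^n_r(x) + P^n_{r+1}(x) + P^n_{r-1}(x), as an identity of rational functions (equivalently, after multiplying through by x, as an identity of polynomials). -/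
open Finset

/-- `1/k!` for `k ≥ 0`, and `0` for negative `k`. -/
noncomputable def finv (k : ℤ) : ℝ := if 0 ≤ k then ((k.toNat.factorial : ℝ))⁻¹ else 0

noncomputable def Pc (n : ℕ) (r : ℤ) (ℓ : ℕ) : ℝ :=
  if ℓ ≤ n then
    (Nat.factorial (2 * n) : ℝ) / (Nat.factorial (n - ℓ) : ℝ) * finv ((ℓ : ℤ) + r) * finv ((ℓ : ℤ) - r)
  else 0

lemma finv_pred (k : ℤ) : finv (k - 1) = k * finv k := by
  rcases le_or_gt 1 k with h | h
  · obtain ⟨m, rfl⟩ : ∃ m : ℕ, k = (m : ℤ) + 1 := ⟨(k - 1).toNat, by omega⟩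
    rw [finv, if_pos (by omega), finv, if_pos (by omega)]
    have h1 : ((m : ℤ) + 1 - 1).toNat = m := by omega
    have h2 : ((m : ℤ) + 1).toNat = m + 1 := by omega
    rw [h1, h2, Nat.factorial_succ]
    have hm : (m.factorial : ℝ) ≠ 0 := Nat.cast_ne_zero.mpr m.factorial_ne_zero
    push_cast
    field_simp
  · rw [finv, if_neg (by omega)]
    rcases lt_or_eq_of_le (show k ≤ 0 by omega) with h0 | h0
    · rw [finv, if_neg (by omega)]; ring
    · subst h0; simp

lemma Pc_of_gt (n : ℕ) (r : ℤ) (ℓ : ℕ) (h : n < ℓ) : Pc n r ℓ = 0 := by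
  rw [Pc, if_neg (by omega)]

lemma Pc_zero (n : ℕ) (r : ℤ) : Pc (n + 1) r 0 = (4 * n + 2) * Pc n r 0 := by
  rw [Pc, if_pos (by omega), Pc, if_pos (by omega)]
  have h1 : 2 * (n + 1) = (2 * n + 1) + 1 := by ring
  rw [h1, Nat.factorial_succ, Nat.factorial_succ, Nat.sub_zero, Nat.sub_zero,
    Nat.factorial_succ]
  have hn : (n.factorial : ℝ) ≠ 0 := Nat.cast_ne_zero.mpr n.factorial_ne_zero
  push_cast
  field_simp
  ring

lemma Pc_succ (n m : ℕ) (r : ℤ) :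
    Pc (n + 1) r (m + 1)
      = (4 * m + 4 * n + 6) * Pc n r (m + 1) + 2 * Pc n r m
        + Pc n (r + 1) m + Pc n (r - 1) m := by
  have fa : finv ((m : ℤ) + r) = ((m : ℝ) + 1 + (r : ℝ)) * finv ((m : ℤ) + 1 + r) := by
    have h := finv_pred ((m : ℤ) + 1 + r)
    rw [show (m : ℤ) + 1 + r - 1 = (m : ℤ) + r by ring] at h
    push_cast at h; exact h
  have fb : finv ((m : ℤ) - r) = ((m : ℝ) + 1 - (r : ℝ)) * finv ((m : ℤ) + 1 - r) := by
    have h := finv_pred ((m : ℤ) + 1 - r)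
    rw [show (m : ℤ) + 1 - r - 1 = (m : ℤ) - r by ring] at h
    push_cast at h; exact h
  have fc : finv ((m : ℤ) + (r + 1)) = finv ((m : ℤ) + 1 + r) := by ring_nf
  have fd : finv ((m : ℤ) - (r + 1))
      = ((m : ℝ) - (r : ℝ)) * (((m : ℝ) + 1 - (r : ℝ)) * finv ((m : ℤ) + 1 - r)) := by
    have h := finv_pred ((m : ℤ) - r)
    rw [show (m : ℤ) - r - 1 = (m : ℤ) - (r + 1) by ring] at h
    push_cast at h; rw [h, fb]
  have fe : finv ((m : ℤ) + (r - 1))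
      = ((m : ℝ) + (r : ℝ)) * (((m : ℝ) + 1 + (r : ℝ)) * finv ((m : ℤ) + 1 + r)) := by
    have h := finv_pred ((m : ℤ) + r)
    rw [show (m : ℤ) + r - 1 = (m : ℤ) + (r - 1) by ring] at h
    push_cast at h; rw [h, fa]
  have ff : finv ((m : ℤ) - (r - 1)) = finv ((m : ℤ) + 1 - r) := by ring_nf
  rcases lt_or_ge n m with h | h
  · rw [Pc_of_gt _ _ _ (by omega), Pc_of_gt _ _ _ (by omega), Pc_of_gt _ _ _ (by omega),
      Pc_of_gt _ _ _ (by omega), Pc_of_gt _ _ _ (by omega)]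
    ring
  · rcases lt_or_eq_of_le h with h' | h'
    · -- m + 1 ≤ n : generic case
      obtain ⟨p, rfl⟩ : ∃ p : ℕ, n = m + 1 + p := ⟨n - m - 1, by omega⟩
      rw [Pc, if_pos (by omega), Pc, if_pos (by omega), Pc, if_pos (by omega),
        Pc, if_pos (by omega), Pc, if_pos (by omega)]
      rw [show (m + 1 + p + 1) - (m + 1) = p + 1 by omega,
        show (m + 1 + p) - (m + 1) = p by omega,
        show (m + 1 + p) - m = p + 1 by omega]
      rw [show 2 * (m + 1 + p + 1) = (2 * (m + 1 + p) + 1) + 1 by ring,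
        Nat.factorial_succ, Nat.factorial_succ, Nat.factorial_succ (p)]
      rw [fa, fb, fc, fd, fe, ff]
      push_cast [Nat.cast_succ]
      have hp : (p.factorial : ℝ) ≠ 0 := Nat.cast_ne_zero.mpr p.factorial_ne_zero
      field_simp
      ring
    · -- m = n : boundary case
      subst h'
      rw [Pc, if_pos (by omega), Pc, if_neg (by omega), Pc, if_pos (by omega),
        Pc, if_pos (by omega), Pc, if_pos (by omega)]
      rw [show (m + 1) - (m + 1) = 0 by omega, show m - m = 0 by omega]
      rw [show 2 * (m + 1) = (2 * m + 1) + 1 by ring,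
        Nat.factorial_succ, Nat.factorial_succ]
      rw [fa, fb, fc, fd, fe, ff]
      push_cast
      field_simp
      ring

/-- The polynomial `P^n_r(x) = ∑_{ℓ=|r|}^n (2n)!/((n-ℓ)!(ℓ+r)!(ℓ-r)!)(-x)^ℓ`
(as a function of a real variable; the empty sum gives `0` when `|r| > n`). -/
noncomputable def Ppoly (n : ℕ) (r : ℤ) (x : ℝ) : ℝ :=
  ∑ ℓ ∈ Finset.Icc r.natAbs n,
    (Nat.factorial (2 * n) : ℝ) /
      ((Nat.factorial (n - ℓ) : ℝ) * (Nat.factorial ((ℓ : ℤ) + r).toNat : ℝ) *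
        (Nat.factorial ((ℓ : ℤ) - r).toNat : ℝ)) * (-x) ^ ℓ

lemma Ppoly_eq (n : ℕ) (r : ℤ) (x : ℝ) :
    Ppoly n r x = ∑ ℓ ∈ range (n + 2), Pc n r ℓ * (-x) ^ ℓ := by
  rw [Ppoly]
  rw [show (∑ ℓ ∈ Finset.Icc r.natAbs n,
      (Nat.factorial (2 * n) : ℝ) /
        ((Nat.factorial (n - ℓ) : ℝ) * (Nat.factorial ((ℓ : ℤ) + r).toNat : ℝ) *
          (Nat.factorial ((ℓ : ℤ) - r).toNat : ℝ)) * (-x) ^ ℓ)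
      = ∑ ℓ ∈ Finset.Icc r.natAbs n, Pc n r ℓ * (-x) ^ ℓ from ?_]
  · refine Finset.sum_subset ?_ ?_
    · intro ℓ hℓ
      simp only [Finset.mem_Icc, Finset.mem_range] at *
      omega
    · intro ℓ _ hℓ
      simp only [Finset.mem_Icc, not_and_or, not_le] at hℓ
      rcases hℓ with h | h
      · rcases le_or_gt ℓ n with hn | hn
        · rw [Pc, if_pos hn]
          have hd : ¬ (0 ≤ (ℓ : ℤ) + r) ∨ ¬ (0 ≤ (ℓ : ℤ) - r) := by omega
          rcases hd with h' | h'
          · rw [show finv ((ℓ:ℤ) + r) = 0 from by rw [finv, if_neg h']]; ring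
          · rw [show finv ((ℓ:ℤ) - r) = 0 from by rw [finv, if_neg h']]; ring
        · rw [Pc_of_gt _ _ _ hn]; ring
      · rw [Pc_of_gt _ _ _ h]; ring
  · refine Finset.sum_congr rfl fun ℓ hℓ => ?_
    simp only [Finset.mem_Icc] at hℓ
    rw [Pc, if_pos hℓ.2]
    rw [show finv ((ℓ:ℤ) + r) = ((((ℓ:ℤ) + r).toNat.factorial : ℝ))⁻¹ from by
      rw [finv, if_pos (by omega)]]
    rw [show finv ((ℓ:ℤ) - r) = ((((ℓ:ℤ) - r).toNat.factorial : ℝ))⁻¹ from by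
      rw [finv, if_pos (by omega)]]
    rw [div_eq_mul_inv, div_eq_mul_inv, mul_inv, mul_inv]
    ring

lemma Ppoly_hasDeriv (n : ℕ) (r : ℤ) (x : ℝ) :
    HasDerivAt (Ppoly n r)
      (∑ ℓ ∈ range (n + 2), Pc n r ℓ * ((ℓ : ℝ) * (-x) ^ (ℓ - 1) * (-1))) x := by
  have he : Ppoly n r = fun y => ∑ ℓ ∈ range (n + 2), Pc n r ℓ * (-y) ^ ℓ :=
    funext (Ppoly_eq n r)
  rw [he]
  apply HasDerivAt.fun_sum
  intro ℓ _
  have h1 : HasDerivAt (fun y : ℝ => (-y) ^ ℓ) ((ℓ : ℝ) * (-x) ^ (ℓ - 1) * (-1)) x :=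
    (hasDerivAt_pow ℓ (-x)).comp x (hasDerivAt_neg x)
  exact h1.const_mul (Pc n r ℓ)

lemma mainsum (n : ℕ) (r : ℤ) (x : ℝ) :
    ∑ ℓ ∈ range (n + 2), ((4 * ℓ + 4 * n + 2 : ℝ) * Pc n r ℓ) * (-x) ^ ℓ
      + ∑ ℓ ∈ range (n + 2),
          (2 * Pc n r ℓ + Pc n (r + 1) ℓ + Pc n (r - 1) ℓ) * (-x) ^ (ℓ + 1)
    = ∑ ℓ ∈ range (n + 2), Pc (n + 1) r ℓ * (-x) ^ ℓ := by
  rw [Finset.sum_range_succ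
      (fun ℓ => (2 * Pc n r ℓ + Pc n (r + 1) ℓ + Pc n (r - 1) ℓ) * (-x) ^ (ℓ + 1)) (n + 1),
    Pc_of_gt n r (n + 1) (by omega), Pc_of_gt n (r + 1) (n + 1) (by omega),
    Pc_of_gt n (r - 1) (n + 1) (by omega)]
  rw [show ((2 * (0:ℝ) + 0 + 0) * (-x) ^ (n + 1 + 1)) = 0 by ring, add_zero]
  rw [Finset.sum_range_succ' (fun ℓ => Pc (n + 1) r ℓ * (-x) ^ ℓ) (n + 1),
    Finset.sum_range_succ' (fun ℓ => ((4 * ℓ + 4 * n + 2 : ℝ) * Pc n r ℓ) * (-x) ^ ℓ) (n + 1)]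
  have hc : ∀ ℓ ∈ range (n + 1),
      Pc (n + 1) r (ℓ + 1) * (-x) ^ (ℓ + 1)
        = ((4 * (ℓ + 1) + 4 * n + 2 : ℝ) * Pc n r (ℓ + 1)) * (-x) ^ (ℓ + 1)
          + (2 * Pc n r ℓ + Pc n (r + 1) ℓ + Pc n (r - 1) ℓ) * (-x) ^ (ℓ + 1) := by
    intro ℓ _
    rw [Pc_succ n ℓ r]
    push_cast
    ring
  rw [Finset.sum_congr rfl hc, Finset.sum_add_distrib, Pc_zero]
  push_cast
  ring

theorem Ppoly_deriv_recurrence (n : ℕ) (r : ℤ) (hr : r.natAbs ≤ n) (x : ℝ) :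
    4 * x * deriv (Ppoly n r) x
      = Ppoly (n + 1) r x + (2 * x - 4 * n - 2) * Ppoly n r x
        + x * Ppoly n (r + 1) x + x * Ppoly n (r - 1) x := by
  rw [(Ppoly_hasDeriv n r x).deriv]
  have hP1 : Ppoly (n + 1) r x = ∑ ℓ ∈ range (n + 2), Pc (n + 1) r ℓ * (-x) ^ ℓ := by
    rw [Ppoly_eq, show n + 1 + 2 = (n + 2) + 1 from rfl, Finset.sum_range_succ,
      Pc_of_gt (n + 1) r (n + 2) (by omega)]
    simp
  rw [hP1, Ppoly_eq n r x, Ppoly_eq n (r + 1) x, Ppoly_eq n (r - 1) x, ← mainsum n r x]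
  rw [Finset.mul_sum, Finset.mul_sum, Finset.mul_sum, Finset.mul_sum]
  rw [← Finset.sum_add_distrib, ← Finset.sum_add_distrib, ← Finset.sum_add_distrib,
    ← Finset.sum_add_distrib]
  refine Finset.sum_congr rfl fun ℓ _ => ?_
  cases ℓ with
  | zero => simp; ring
  | succ k =>
    simp only [Nat.add_sub_cancel, pow_succ]
    push_cast
    ring
end
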